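/- arXiv:2210.14172 — 3 statements merged into one kernel-verified Lean document; each statement's English description precedes it below -/
import Mathlib

section
/- If W = {w₁,…,wₘ} is a Nielsen-reduced subset of a free group F, then to each v ∈ W^{±1} one may associate reduced words a(v) and m(v) with m(v) ≠ 1 such that v = a(v)·m(v)·a(v⁻¹)⁻¹ is a reduced factorization, and whenever u = v₁v₂⋯vₜ with each vᵢ ∈ W^{±1} and vᵢvᵢ₊₁ ≠ 1 for all i, the subwords m(v₁),…,m(vₜ) remain uncanceled in the reduced form of u; in particular the reduced length of u is at least t. -/
open FreeGroup

def flen {α : Type*} [DecidableEq α] (g : FreeGroup α) : ℕ := g.toWord.length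

def symmClosure {α : Type*} (W : Set (FreeGroup α)) : Set (FreeGroup α) :=
  {v | v ∈ W ∨ v⁻¹ ∈ W}

def NielsenReduced {α : Type*} [DecidableEq α] (W : Set (FreeGroup α)) : Prop :=
  ∀ v₁ ∈ symmClosure W, ∀ v₂ ∈ symmClosure W, ∀ v₃ ∈ symmClosure W,
    v₁ ≠ 1 ∧
    (v₁ * v₂ ≠ 1 → flen (v₁ * v₂) ≥ max (flen v₁) (flen v₂)) ∧
    (v₁ * v₂ ≠ 1 → v₂ * v₃ ≠ 1 →
      (flen (v₁ * v₂ * v₃) : ℤ) > (flen v₁ : ℤ) - flen v₂ + flen v₃)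

namespace Zieschang
open List
set_option linter.unusedSectionVars false
variable {α : Type*} [DecidableEq α]

def Rd (L : List (α × Bool)) : Prop := L.Chain' (fun a b => ¬(a.1 = b.1 ∧ a.2 = !b.2))

lemma rd_reduce (L : List (α × Bool)) : Rd (reduce L) := by
  induction L with
  | nil => simp [Rd, List.Chain']
  | cons x L ih =>
    rw [reduce.cons]
    rcases h : reduce L with _ | ⟨y, t⟩
    · simp [Rd, List.Chain']
    · rw [h] at ih
      change Rd (if x.1 = y.1 ∧ x.2 = !y.2 then t else x :: y :: t)
      split
      · exact ih.tail
      · exact ih.cons (by rename_i hn; simpa using hn)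

lemma rd_fix {L : List (α × Bool)} (h : Rd L) : reduce L = L := by
  induction L with
  | nil => rfl
  | cons x L ih =>
    rw [reduce.cons, ih h.tail]
    rcases L with _ | ⟨y, t⟩
    · rfl
    · change (if x.1 = y.1 ∧ x.2 = !y.2 then t else x :: y :: t) = _
      rw [if_neg (List.isChain_cons_cons.mp h).1]

lemma rd_toWord (x : FreeGroup α) : Rd x.toWord := by
  rw [← reduce_toWord]; exact rd_reduce _

lemma toWord_mk_rd {L : List (α × Bool)} (h : Rd L) : (mk L).toWord = L := by
  rw [toWord_mk, rd_fix h]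

lemma Rd.infix {L L' : List (α × Bool)} (h : Rd L) (h' : L' <:+: L) : Rd L' :=
  List.IsChain.infix h h'

lemma flen_mk_le (L : List (α × Bool)) : flen (mk L) ≤ L.length := by
  unfold flen; rw [toWord_mk]; exact Red.length_le (reduce.red)

lemma invRev_append (L₁ L₂ : List (α × Bool)) :
    invRev (L₁ ++ L₂) = invRev L₂ ++ invRev L₁ := by simp [invRev]

lemma invRev_cons (a : α × Bool) (L : List (α × Bool)) :
    invRev (a :: L) = invRev L ++ [(a.1, !a.2)] := by simp [invRev]

lemma mul_decomp_aux : ∀ (n : ℕ) (x y : List (α × Bool)), x.length ≤ n → Rd x → Rd y →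
    ∃ x₁ c y₁, x = x₁ ++ c ∧ y = invRev c ++ y₁ ∧ reduce (x ++ y) = x₁ ++ y₁ := by
  intro n
  induction n with
  | zero =>
    intro x y hl hx hy
    have : x = [] := List.length_eq_zero_iff.mp (Nat.le_zero.mp hl)
    subst this
    exact ⟨[], [], y, by simp, by simp [invRev], by simp [rd_fix hy]⟩
  | succ n ih =>
    intro x y hl hx hy
    rcases eq_or_ne x [] with rfl | hxne
    · exact ⟨[], [], y, by simp, by simp [invRev], by simp [rd_fix hy]⟩
    rcases eq_or_ne y [] with rfl | hyne
    · exact ⟨x, [], [], by simp, by simp [invRev], by simp [rd_fix hx]⟩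
    obtain rfl | ⟨x', a, rfl⟩ := List.eq_nil_or_concat x
    · exact absurd rfl hxne
    simp only [List.concat_eq_append] at hx hl hxne ⊢
    obtain ⟨b, y', rfl⟩ := List.exists_cons_of_ne_nil hyne
    by_cases hab : b = (a.1, !a.2)
    · subst hab
      have hstep : Red.Step ((x' ++ [a]) ++ ((a.1, !a.2) :: y')) (x' ++ y') := by
        have := @FreeGroup.Red.Step.not α x' y' a.1 a.2
        simpa using this
      have hred : reduce ((x' ++ [a]) ++ ((a.1, !a.2) :: y')) = reduce (x' ++ y') :=
        reduce.Step.eq hstep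
      obtain ⟨x₁, c, y₁, h1, h2, h3⟩ := ih x' y'
        (by simpa using Nat.le_of_succ_le_succ (by simpa using hl))
        (hx.infix ⟨[], [a], by simp⟩) (hy.infix ⟨[(a.1, !a.2)], [], by simp⟩)
      refine ⟨x₁, c ++ [a], y₁, ?_, ?_, ?_⟩
      · rw [h1, List.append_assoc]
      · rw [invRev_append, h2]
        simp [invRev]
      · rw [hred, h3]
    · have hrd : Rd ((x' ++ [a]) ++ (b :: y')) := by
        rw [Rd]; show List.IsChain _ _; rw [List.isChain_append]
        refine ⟨hx, hy, ?_⟩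
        intro p hp q hq
        simp at hp hq
        subst hp; subst hq
        rintro ⟨h1, h2⟩
        exact hab (by rw [Prod.ext_iff]; exact ⟨h1.symm, by simp [h2]⟩)
      exact ⟨x' ++ [a], [], b :: y', by simp, by simp [invRev], by rw [rd_fix hrd]⟩

lemma toWord_mul' (u v : FreeGroup α) : (u * v).toWord = reduce (u.toWord ++ v.toWord) := by
  conv_lhs => rw [← mk_toWord (x := u), ← mk_toWord (x := v)]
  rw [mul_mk, toWord_mk]

def canc (u v : FreeGroup α) : ℕ := (flen u + flen v - flen (u * v)) / 2

lemma canc_spec (u v : FreeGroup α) : ∃ x₁ c y₁,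
    u.toWord = x₁ ++ c ∧ v.toWord = invRev c ++ y₁ ∧ (u * v).toWord = x₁ ++ y₁ ∧
    c.length = canc u v ∧ flen (u * v) + 2 * canc u v = flen u + flen v := by
  obtain ⟨x₁, c, y₁, h1, h2, h3⟩ :=
    mul_decomp_aux (u.toWord.length) u.toWord v.toWord le_rfl (rd_toWord u) (rd_toWord v)
  have h4 : (u * v).toWord = x₁ ++ y₁ := by rw [toWord_mul', h3]
  have l1 : flen u = x₁.length + c.length := by rw [flen, h1, List.length_append]
  have l2 : flen v = c.length + y₁.length := by
    rw [flen, h2, List.length_append, invRev_length]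
  have l3 : flen (u * v) = x₁.length + y₁.length := by rw [flen, h4, List.length_append]
  have hc : c.length = canc u v := by rw [canc]; omega
  exact ⟨x₁, c, y₁, h1, h2, h4, hc, by rw [canc]; omega⟩

lemma canc_eq (u v : FreeGroup α) : flen (u * v) + 2 * canc u v = flen u + flen v :=
  (canc_spec u v).choose_spec.choose_spec.choose_spec.2.2.2.2

lemma canc_ge (u v : FreeGroup α) {x' c y' : List (α × Bool)}
    (hu : u.toWord = x' ++ c) (hv : v.toWord = invRev c ++ y') : c.length ≤ canc u v := by
  have huv : u * v = mk (x' ++ y') := by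
    rw [← mk_toWord (x := u), ← mk_toWord (x := v), hu, hv, mul_mk]
    rw [show x' ++ c ++ (invRev c ++ y') = x' ++ c ++ invRev c ++ y' by
      simp [List.append_assoc]]
    calc mk (x' ++ c ++ invRev c ++ y') = mk x' * mk c * (mk c)⁻¹ * mk y' := by
          rw [inv_mk, mul_mk, mul_mk, mul_mk]
      _ = mk x' * mk y' := by group
      _ = mk (x' ++ y') := mul_mk
  have h1 : flen (u * v) ≤ x'.length + y'.length := by
    have := flen_mk_le (x' ++ y')
    rw [← huv] at this
    simpa using this
  have l1 : flen u = x'.length + c.length := by rw [flen, hu, List.length_append]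
  have l2 : flen v = c.length + y'.length := by
    rw [flen, hv, List.length_append, invRev_length]
  have := canc_eq u v
  omega

lemma flen_inv (u : FreeGroup α) : flen u⁻¹ = flen u := by
  rw [flen, flen, toWord_inv, invRev_length]

lemma canc_inv (u v : FreeGroup α) : canc u v = canc v⁻¹ u⁻¹ := by
  have h1 := canc_eq u v
  have h2 := canc_eq v⁻¹ u⁻¹
  rw [← mul_inv_rev, flen_inv, flen_inv, flen_inv] at h2
  omega

lemma canc_le_right (u v : FreeGroup α) : canc u v ≤ flen v := by
  obtain ⟨x₁, c, y₁, _, h2, _, hc, _⟩ := canc_spec u v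
  rw [← hc, flen, h2, List.length_append, invRev_length]
  omega


section PP
variable (W : Set (FreeGroup α))

def cancSet (v : FreeGroup α) : Set ℕ :=
  {n | ∃ w ∈ symmClosure W, w * v ≠ 1 ∧ n = canc w v}

noncomputable def pp (v : FreeGroup α) : ℕ := sSup (cancSet W v)

lemma cancSet_bdd (v : FreeGroup α) : BddAbove (cancSet W v) :=
  ⟨flen v, fun n hn => by obtain ⟨w, _, _, rfl⟩ := hn; exact canc_le_right w v⟩

lemma pp_witness {v : FreeGroup α} (h : pp W v ≠ 0) :
    ∃ w ∈ symmClosure W, w * v ≠ 1 ∧ pp W v ∈ cancSet W v ∧ pp W v = canc w v := by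
  have hne : (cancSet W v).Nonempty := by
    by_contra h'
    rw [Set.not_nonempty_iff_eq_empty] at h'
    exact h (by rw [pp, h', csSup_empty]; rfl)
  obtain ⟨w, hw, hne1, hc⟩ := Nat.sSup_mem hne (cancSet_bdd W v)
  exact ⟨w, hw, hne1, Nat.sSup_mem hne (cancSet_bdd W v), hc⟩

lemma le_pp {w v : FreeGroup α} (hw : w ∈ symmClosure W) (hne : w * v ≠ 1) :
    canc w v ≤ pp W v :=
  le_csSup (cancSet_bdd W v) ⟨w, hw, hne, rfl⟩

lemma symm_inv {v : FreeGroup α} (h : v ∈ symmClosure W) : v⁻¹ ∈ symmClosure W := by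
  rcases h with h | h
  · exact Or.inr (by simpa using h)
  · exact Or.inl h

variable (hW : ∀ v₁ ∈ symmClosure W, ∀ v₂ ∈ symmClosure W, ∀ v₃ ∈ symmClosure W,
    v₁ ≠ 1 ∧
    (v₁ * v₂ ≠ 1 → flen (v₁ * v₂) ≥ max (flen v₁) (flen v₂)) ∧
    (v₁ * v₂ ≠ 1 → v₂ * v₃ ≠ 1 →
      (flen (v₁ * v₂ * v₃) : ℤ) > (flen v₁ : ℤ) - flen v₂ + flen v₃))
include hW

lemma flen_pos {v : FreeGroup α} (hv : v ∈ symmClosure W) : 1 ≤ flen v := by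
  have h1 : v ≠ 1 := (hW v hv v hv v hv).1
  have : v.toWord ≠ [] := fun h => h1 (toWord_eq_nil_iff.mp h)
  have h2 : v.toWord.length ≠ 0 := fun h => this (List.length_eq_zero_iff.mp h)
  simp only [flen]
  omega

lemma two_pp_le {v : FreeGroup α} (hv : v ∈ symmClosure W) : 2 * pp W v ≤ flen v := by
  rcases eq_or_ne (pp W v) 0 with h | h
  · omega
  obtain ⟨w, hw, hne, _, hc⟩ := pp_witness W h
  have hN1 := (hW w hw v hv v hv).2.1 hne
  have := canc_eq w v
  have := le_max_left (flen w) (flen v)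
  have := le_max_right (flen w) (flen v)
  omega

lemma middle_lt {v : FreeGroup α} (hv : v ∈ symmClosure W) :
    pp W v + pp W v⁻¹ < flen v := by
  by_contra hge
  push_neg at hge
  have h2p := two_pp_le W hW hv
  have h2q := two_pp_le W hW (symm_inv W hv)
  rw [flen_inv] at h2q
  have hL1 : 1 ≤ flen v := flen_pos W hW hv
  have hpq : 2 * pp W v = flen v ∧ 2 * pp W v⁻¹ = flen v := by omega
  obtain ⟨w₁, hw₁, hne₁, _, hcanc₁⟩ := pp_witness W (v := v) (by omega)
  obtain ⟨w, hw, hne, _, hcanc⟩ := pp_witness W (v := v⁻¹) (by omega)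
  have hvw₂ : v * w⁻¹ ≠ 1 := by
    intro h
    apply hne
    have : (v * w⁻¹)⁻¹ = 1 := by rw [h]; simp
    rwa [mul_inv_rev, inv_inv] at this
  have hcancvw : canc v w⁻¹ = pp W v⁻¹ := by
    rw [canc_inv v w⁻¹, inv_inv]; exact hcanc.symm
  obtain ⟨x, c, d, hu1, hv1, _, hclen, _⟩ := canc_spec w₁ v
  obtain ⟨e, f, g, hv2, hw2, _, hflen, _⟩ := canc_spec v w⁻¹
  have hLc : c.length = pp W v := by rw [hclen, ← hcanc₁]
  have hLf : f.length = pp W v⁻¹ := by rw [hflen, hcancvw]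
  have hlenv : flen v = (invRev c ++ d).length := by rw [flen, hv1]
  have hlenv2 : flen v = (e ++ f).length := by rw [flen, hv2]
  have hlen_e : (invRev c).length = e.length := by
    rw [invRev_length]
    simp only [List.length_append, invRev_length] at hlenv hlenv2
    omega
  obtain ⟨he, hf⟩ := List.append_inj (hv1.symm.trans hv2) hlen_e
  have hw₁eq : w₁ = mk (x ++ c) := by rw [← mk_toWord (x := w₁), hu1]
  have hveq : v = mk (invRev c ++ d) := by rw [← mk_toWord (x := v), hv1]
  have hw₂eq : w⁻¹ = mk (invRev d ++ g) := by
    rw [← mk_toWord (x := w⁻¹), hw2, ← hf]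
  have key : w₁ * v * w⁻¹ = mk x * mk g := by
    rw [hw₁eq, hveq, hw₂eq]
    simp only [← mul_mk, ← inv_mk]
    group
  have hlen_key : flen (w₁ * v * w⁻¹) ≤ x.length + g.length := by
    rw [key, mul_mk]
    simpa using flen_mk_le (x ++ g)
  have hN2 := (hW w₁ hw₁ v hv w⁻¹ (symm_inv W hw)).2.2 hne₁ hvw₂
  have hlw₁ : flen w₁ = x.length + c.length := by rw [flen, hu1, List.length_append]
  have hlw₂ : flen w⁻¹ = f.length + g.length := by
    rw [flen, hw2, List.length_append, invRev_length]
  have hlvd : flen v = c.length + d.length := by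
    rw [flen, hv1, List.length_append, invRev_length]
  omega

end PP

section AMB
variable (W : Set (FreeGroup α))

noncomputable def Aw (v : FreeGroup α) : List (α × Bool) := v.toWord.take (pp W v)
noncomputable def Mw (v : FreeGroup α) : List (α × Bool) :=
  (v.toWord.drop (pp W v)).take (flen v - pp W v - pp W v⁻¹)
noncomputable def Bw (v : FreeGroup α) : List (α × Bool) := v.toWord.drop (flen v - pp W v⁻¹)

noncomputable def aF (v : FreeGroup α) : FreeGroup α := mk (Aw W v)
noncomputable def mF (v : FreeGroup α) : FreeGroup α := mk (Mw W v)

lemma invRev_take (L : List (α × Bool)) (n : ℕ) :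
    (invRev L).take n = invRev (L.drop (L.length - n)) := by
  simp [invRev, List.take_reverse, List.map_drop]

variable {v : FreeGroup α}

lemma split_v (hmid : pp W v + pp W v⁻¹ < flen v) : v.toWord = Aw W v ++ (Mw W v ++ Bw W v) := by
  conv_lhs => rw [← List.take_append_drop (pp W v) v.toWord]
  rw [Aw]
  congr 1
  conv_lhs => rw [← List.take_append_drop (flen v - pp W v - pp W v⁻¹)
    (v.toWord.drop (pp W v))]
  rw [Mw, Bw]
  congr 1
  rw [List.drop_drop]
  congr 1
  simp only [flen] at hmid ⊢
  omega

lemma length_Aw (hmid : pp W v + pp W v⁻¹ < flen v) : (Aw W v).length = pp W v := by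
  rw [Aw, List.length_take]
  simp only [flen] at hmid ⊢
  omega

lemma length_Mw (hmid : pp W v + pp W v⁻¹ < flen v) : (Mw W v).length = flen v - pp W v - pp W v⁻¹ := by
  rw [Mw, List.length_take, List.length_drop]
  simp only [flen] at hmid ⊢
  omega

lemma length_Bw (hmid : pp W v + pp W v⁻¹ < flen v) : (Bw W v).length = pp W v⁻¹ := by
  rw [Bw, List.length_drop]
  simp only [flen] at hmid ⊢
  omega

lemma rd_Aw : Rd (Aw W v) := (rd_toWord v).infix (List.take_prefix _ _).isInfix
lemma rd_Bw : Rd (Bw W v) := (rd_toWord v).infix (List.drop_suffix _ _).isInfix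
lemma rd_Mw : Rd (Mw W v) :=
  (rd_toWord v).infix (((List.take_prefix _ _).isInfix).trans (List.drop_suffix _ _).isInfix)

lemma toWord_aF : (aF W v).toWord = Aw W v := toWord_mk_rd (rd_Aw W)
lemma toWord_mF : (mF W v).toWord = Mw W v := toWord_mk_rd (rd_Mw W)

lemma Aw_inv : Aw W v⁻¹ = invRev (Bw W v) := by
  rw [Aw, toWord_inv, invRev_take, Bw]
  rfl

lemma aF_inv : (aF W v⁻¹)⁻¹ = mk (Bw W v) := by
  rw [aF, Aw_inv, inv_mk, invRev_invRev]

end AMB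

lemma drop_suffix_eq {β : Type*} (A B : List β) (n : ℕ) (h : n ≤ B.length) :
    (A ++ B).drop ((A ++ B).length - n) = B.drop (B.length - n) := by
  rw [List.length_append, show A.length + B.length - n = A.length + (B.length - n) by omega,
    List.drop_length_add_append]

section Main
variable (W : Set (FreeGroup α))
variable (hW : ∀ v₁ ∈ symmClosure W, ∀ v₂ ∈ symmClosure W, ∀ v₃ ∈ symmClosure W,
    v₁ ≠ 1 ∧ (v₁ * v₂ ≠ 1 → flen (v₁ * v₂) ≥ max (flen v₁) (flen v₂)) ∧
    (v₁ * v₂ ≠ 1 → v₂ * v₃ ≠ 1 →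
      (flen (v₁ * v₂ * v₃) : ℤ) > (flen v₁ : ℤ) - flen v₂ + flen v₃))
include hW

lemma main_ind (l' : List (FreeGroup α)) : ∀ w : FreeGroup α,
    (∀ v ∈ l' ++ [w], v ∈ symmClosure W) →
    (l' ++ [w]).Chain' (fun v₁ v₂ => v₁ * v₂ ≠ 1) →
    ∃ cs' : List (List (α × Bool)), cs'.length = l'.length + 1 ∧
      ((l' ++ [w]).prod).toWord =
        (cs'.headI ++ (List.map (fun p => p.1 ++ p.2)
          (List.zip (l'.map fun v => (mF W v).toWord) cs'.tail)).flatten)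
          ++ (Mw W w ++ Bw W w) := by
  induction l' using List.reverseRecOn with
  | nil =>
    intro w hmem _
    have hw : w ∈ symmClosure W := hmem w (by simp)
    have hmid := middle_lt W hW hw
    refine ⟨[Aw W w], by simp, ?_⟩
    simp only [List.nil_append, List.prod_cons, List.prod_nil, mul_one, List.map_nil,
      List.zip_nil_left, List.flatten_nil, List.append_nil, List.headI]
    rw [split_v W hmid]
  | append_singleton l₀ w' ih =>
    intro w hmem hchain
    have hmem' : ∀ v ∈ l₀ ++ [w'], v ∈ symmClosure W := fun v hv =>
      hmem v (by simp only [List.mem_append, List.mem_singleton] at hv ⊢; tauto)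
    have hchain' : (l₀ ++ [w']).Chain' (fun v₁ v₂ => v₁ * v₂ ≠ 1) :=
      hchain.prefix ⟨[w], rfl⟩
    have hw'w : w' * w ≠ 1 := by
      have h := (List.isChain_append.mp hchain).2.2
      exact h w' (by rw [List.getLast?_concat]; rfl) w (by rfl)
    obtain ⟨cs', hlen', hu⟩ := ih w' hmem' hchain'
    obtain ⟨c₀, ct, rfl⟩ : ∃ c₀ ct, cs' = c₀ :: ct := by
      rcases cs' with _ | ⟨c₀, ct⟩
      · simp at hlen'
      · exact ⟨_, _, rfl⟩
    simp only [List.headI, List.tail_cons] at hu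
    have hct : ct.length = l₀.length := by simpa using hlen'
    have hw'mem : w' ∈ symmClosure W := hmem w' (by simp)
    have hwmem : w ∈ symmClosure W := hmem w (by simp)
    have hmid' := middle_lt W hW hw'mem
    have hmidw := middle_lt W hW hwmem
    obtain ⟨x₁, c, y₁, huw, hwt, huvw, hclen, hceq⟩ := canc_spec ((l₀ ++ [w']).prod) w
    set u := (l₀ ++ [w']).prod with hu_def
    set MB := Mw W w' ++ Bw W w' with hMB
    set n := min c.length MB.length with hn
    have hnc : n ≤ c.length := min_le_left _ _
    have hnMB : n ≤ MB.length := min_le_right _ _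
    have hs1 : u.toWord.drop (u.toWord.length - n) = MB.drop (MB.length - n) := by
      rw [hu]; exact drop_suffix_eq _ MB n hnMB
    have hs2 : u.toWord.drop (u.toWord.length - n) = c.drop (c.length - n) := by
      rw [huw]; exact drop_suffix_eq x₁ c n hnc
    set s := MB.drop (MB.length - n) with hsdef
    have hslen : s.length = n := by rw [hsdef, List.length_drop]; omega
    have hw'split := split_v W hmid'
    have hs3 : w'.toWord.drop (w'.toWord.length - n) = s := by
      rw [hw'split, ← hMB]; exact drop_suffix_eq _ MB n hnMB
    have hw'decomp : w'.toWord = w'.toWord.take (w'.toWord.length - n) ++ s := by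
      conv_lhs => rw [← List.take_append_drop (w'.toWord.length - n) w'.toWord]
      rw [hs3]
    have hcs : c = c.take (c.length - n) ++ s := by
      conv_lhs => rw [← List.take_append_drop (c.length - n) c]
      rw [← hs2, hs1]
    have hwdecomp : w.toWord = invRev s ++ (invRev (c.take (c.length - n)) ++ y₁) := by
      rw [hwt]
      conv_lhs => rw [hcs]
      rw [invRev_append, List.append_assoc]
    have hcanc_ge : n ≤ canc w' w := by
      have := canc_ge w' w hw'decomp hwdecomp
      omega
    have hc1 : canc w' w ≤ pp W w := le_pp W hw'mem hw'w
    have hinv_ne : w⁻¹ * w'⁻¹ ≠ 1 := by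
      intro h
      exact hw'w (by simpa [mul_inv_rev] using congrArg Inv.inv h)
    have hc2 : canc w' w ≤ pp W w'⁻¹ := by
      rw [canc_inv]; exact le_pp W (symm_inv W hwmem) hinv_ne
    have hMBlen : MB.length = (Mw W w').length + (Bw W w').length := by
      rw [hMB, List.length_append]
    have hlM' := length_Mw W hmid'
    have hlB' := length_Bw W hmid'
    have hcn : c.length = n := by omega
    have hcBw : c.length ≤ (Bw W w').length := by omega
    have hcAw : c.length ≤ (Aw W w).length := by rw [length_Aw W hmidw]; omega
    -- split x₁
    have hB12 : Bw W w' = (Bw W w').take ((Bw W w').length - c.length) ++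
        (Bw W w').drop ((Bw W w').length - c.length) := (List.take_append_drop _ _).symm
    have hB₂len : ((Bw W w').drop ((Bw W w').length - c.length)).length = c.length := by
      rw [List.length_drop]; omega
    have hx₁ : x₁ = c₀ ++ (List.map (fun p => p.1 ++ p.2)
        (List.zip (l₀.map fun v => (mF W v).toWord) ct)).flatten ++
        (Mw W w' ++ (Bw W w').take ((Bw W w').length - c.length)) := by
      have h1 : u.toWord = (c₀ ++ (List.map (fun p => p.1 ++ p.2)
          (List.zip (l₀.map fun v => (mF W v).toWord) ct)).flatten ++
          (Mw W w' ++ (Bw W w').take ((Bw W w').length - c.length))) ++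
          (Bw W w').drop ((Bw W w').length - c.length) := by
        rw [hu, hMB]
        conv_lhs => rw [hB12]
        simp [List.append_assoc]
      rw [huw] at h1
      exact (List.append_inj' h1 (by rw [hB₂len])).1
    -- split y₁
    have hA12 : Aw W w = (Aw W w).take c.length ++ (Aw W w).drop c.length :=
      (List.take_append_drop _ _).symm
    have hA₁len : ((Aw W w).take c.length).length = c.length := by
      rw [List.length_take]; omega
    have hy₁ : y₁ = (Aw W w).drop c.length ++ (Mw W w ++ Bw W w) := by
      have h1 : w.toWord = (Aw W w).take c.length ++
          ((Aw W w).drop c.length ++ (Mw W w ++ Bw W w)) := by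
        rw [split_v W hmidw]
        conv_lhs => rw [hA12]
        rw [List.append_assoc]
      rw [hwt] at h1
      have hlen2 : (invRev c).length = ((Aw W w).take c.length).length := by
        rw [invRev_length, hA₁len]
      exact (List.append_inj h1 hlen2).2
    have hfinal : (u * w).toWord = (c₀ ++ (List.map (fun p => p.1 ++ p.2)
        (List.zip (l₀.map fun v => (mF W v).toWord) ct)).flatten ++
        (Mw W w' ++ ((Bw W w').take ((Bw W w').length - c.length) ++
          (Aw W w).drop c.length))) ++ (Mw W w ++ Bw W w) := by
      rw [huvw, hx₁, hy₁]
      simp [List.append_assoc]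
    refine ⟨c₀ :: (ct ++ [(Bw W w').take ((Bw W w').length - c.length) ++
      (Aw W w).drop c.length]), by simp [hct], ?_⟩
    have hprod : ((l₀ ++ [w']) ++ [w]).prod = u * w := by
      rw [hu_def, List.prod_append, List.prod_cons, List.prod_nil, mul_one]
    rw [hprod, hfinal]
    have hzip : List.zip ((l₀ ++ [w']).map fun v => (mF W v).toWord)
        (ct ++ [(Bw W w').take ((Bw W w').length - c.length) ++ (Aw W w).drop c.length])
        = List.zip (l₀.map fun v => (mF W v).toWord) ct ++
          [((mF W w').toWord, (Bw W w').take ((Bw W w').length - c.length) ++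
            (Aw W w).drop c.length)] := by
      rw [List.map_append, List.zip_append (by simp [hct])]
      rfl
    simp only [List.headI, List.tail_cons]
    rw [hzip]
    simp only [List.map_append, List.flatten_append, toWord_mF]
    simp [List.append_assoc]

end Main

lemma flatten_ge {β : Type*} (Z : List (List β × List β)) (h : ∀ pr ∈ Z, pr.1 ≠ []) :
    Z.length ≤ ((Z.map fun p : List β × List β => p.1 ++ p.2).flatten).length := by
  induction Z with
  | nil => simp
  | cons a Z ih =>
    simp only [List.map_cons, List.flatten_cons, List.length_append, List.length_cons]
    have h1 : a.1 ≠ [] := h a (by simp)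
    have h2 : 1 ≤ a.1.length := by
      rcases ha : a.1 with _ | _
      · exact absurd ha h1
      · simp
    have h3 := ih (fun pr hpr => h pr (by simp [hpr]))
    omega

end Zieschang


/-- Zieschang's strengthening of Nielsen's result: for a Nielsen-reduced set `W` one can
associate to each `v ∈ W^{±1}` words `a v` and `m v`, with `m v ≠ 1`, such that
`v = a v * m v * (a v⁻¹)⁻¹` is a reduced factorization, and for any product
`u = v₁ ⋯ vₜ` of elements of `W^{±1}` with no adjacent cancellation, the middles
`m v₁, …, m vₜ` remain uncanceled (appear as disjoint subwords, in order) in the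
reduced word of `u`; in particular the reduced length of `u` is at least `t`. -/
theorem zieschang_uncanceled {α : Type*} [DecidableEq α] (W : Set (FreeGroup α))
    (hW : NielsenReduced W) :
    ∃ a m : FreeGroup α → FreeGroup α,
      (∀ v ∈ symmClosure W,
        m v ≠ 1 ∧
        v = a v * m v * (a v⁻¹)⁻¹ ∧
        flen v = flen (a v) + flen (m v) + flen (a v⁻¹)) ∧
      (∀ l : List (FreeGroup α), (∀ v ∈ l, v ∈ symmClosure W) →
        l.Chain' (fun v₁ v₂ => v₁ * v₂ ≠ 1) →
        (∃ cs : List (List (α × Bool)), cs.length = l.length + 1 ∧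
          (l.prod).toWord =
            cs.headI ++
              (List.map (fun p => p.1 ++ p.2)
                (List.zip (l.map fun v => (m v).toWord) cs.tail)).flatten) ∧
        l.length ≤ flen l.prod) := by
  classical
  refine ⟨Zieschang.aF W, Zieschang.mF W, ?_, ?_⟩
  · intro v hv
    have hmid := Zieschang.middle_lt W hW hv
    refine ⟨?_, ?_, ?_⟩
    · intro h
      have h2 : (Zieschang.mF W v).toWord = [] := by rw [h, toWord_one]
      rw [Zieschang.toWord_mF] at h2
      have h3 := Zieschang.length_Mw W hmid
      rw [h2] at h3
      simp at h3
      omega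
    · rw [Zieschang.aF_inv, Zieschang.aF, Zieschang.mF, mul_mk, mul_mk]
      conv_lhs => rw [← mk_toWord (x := v), Zieschang.split_v W hmid]
      rw [← List.append_assoc]
    · have h1 : flen (Zieschang.aF W v) = Zieschang.pp W v := by
        rw [flen, Zieschang.toWord_aF, Zieschang.length_Aw W hmid]
      have h2 : flen (Zieschang.mF W v) = flen v - Zieschang.pp W v - Zieschang.pp W v⁻¹ := by
        rw [flen, Zieschang.toWord_mF, Zieschang.length_Mw W hmid]
      have h3 : flen (Zieschang.aF W v⁻¹) = Zieschang.pp W v⁻¹ := by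
        rw [flen, Zieschang.toWord_aF, Zieschang.Aw_inv, invRev_length,
          Zieschang.length_Bw W hmid]
      omega
  · intro l hmem hchain
    rcases List.eq_nil_or_concat l with rfl | ⟨l', w, rfl⟩
    · exact ⟨⟨[[]], by simp, by simp⟩, by simp⟩
    simp only [List.concat_eq_append] at hmem hchain ⊢
    have hwmem : w ∈ symmClosure W := hmem w (by simp)
    have hmid := Zieschang.middle_lt W hW hwmem
    obtain ⟨cs', hlen', hu⟩ := Zieschang.main_ind W hW l' w hmem hchain
    obtain ⟨c₀, ct, rfl⟩ : ∃ c₀ ct, cs' = c₀ :: ct := by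
      rcases cs' with _ | ⟨c₀, ct⟩
      · simp at hlen'
      · exact ⟨_, _, rfl⟩
    simp only [List.headI, List.tail_cons] at hu
    have hct : ct.length = l'.length := by simpa using hlen'
    constructor
    · refine ⟨(c₀ :: ct) ++ [Zieschang.Bw W w], by simp [hct], ?_⟩
      have hzip : List.zip ((l' ++ [w]).map fun v => (Zieschang.mF W v).toWord)
          (ct ++ [Zieschang.Bw W w])
          = List.zip (l'.map fun v => (Zieschang.mF W v).toWord) ct ++
            [((Zieschang.mF W w).toWord, Zieschang.Bw W w)] := by
        rw [List.map_append, List.zip_append (by simp [hct])]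
        rfl
      simp only [List.cons_append, List.headI, List.tail_cons]
      rw [hzip, hu]
      simp only [List.map_append, List.flatten_append, Zieschang.toWord_mF]
      simp [List.append_assoc]
    · have hzl : (List.zip (l'.map fun v => (Zieschang.mF W v).toWord) ct).length
          = l'.length := by
        rw [List.length_zip]
        simp [hct]
      have hge : l'.length ≤ ((List.map (fun p => p.1 ++ p.2)
          (List.zip (l'.map fun v => (Zieschang.mF W v).toWord) ct)).flatten).length := by
        rw [← hzl]
        refine Zieschang.flatten_ge _ ?_
        intro pr hpr
        obtain ⟨a, b⟩ := pr
        obtain ⟨h1, _⟩ := List.of_mem_zip hpr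
        obtain ⟨v, hvl, rfl⟩ := List.mem_map.mp h1
        have hvmem : v ∈ symmClosure W := hmem v (by simp [hvl])
        have hmidv := Zieschang.middle_lt W hW hvmem
        show (Zieschang.mF W v).toWord ≠ []
        rw [Zieschang.toWord_mF]
        intro hemp
        have h3 := Zieschang.length_Mw W hmidv
        rw [hemp] at h3
        simp at h3
        omega
      have hlM := Zieschang.length_Mw W hmid
      have hflen : flen ((l' ++ [w]).prod) =
          (c₀ ++ (List.map (fun p => p.1 ++ p.2)
            (List.zip (l'.map fun v => (Zieschang.mF W v).toWord) ct)).flatten).length +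
          ((Zieschang.Mw W w).length + (Zieschang.Bw W w).length) := by
        rw [flen, hu]
        simp only [List.length_append]
      rw [hflen]
      simp only [List.length_append, List.length_singleton]
      omega
end

section
/- Let G = G₁ *_H G₂ be an amalgamated free product. If X₁,…,Xₙ ∈ G₁ and Y₁,…,Yₙ ∈ G₂ with n > 1 are such that Xᵢ ∉ H for all i > 1 and Yᵢ ∉ H for all i < n, then the product X₁Y₁X₂Y₂⋯XₙYₙ ≠ 1 in G. -/
/-- The amalgamated free product `G₁ *_H G₂`, presented as the quotient of the free
product `G₁ ∗ G₂` by the normal closure of the relations `i₁(h) = i₂(h)`, `h ∈ H`. -/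
def Amalgam {G₁ G₂ H : Type*} [Group G₁] [Group G₂] [Group H]
    (i₁ : H →* G₁) (i₂ : H →* G₂) : Type _ :=
  (Monoid.Coprod G₁ G₂) ⧸ Subgroup.normalClosure
    {x | ∃ h : H, x = Monoid.Coprod.inl (i₁ h) * (Monoid.Coprod.inr (i₂ h))⁻¹}

instance {G₁ G₂ H : Type*} [Group G₁] [Group G₂] [Group H]
    (i₁ : H →* G₁) (i₂ : H →* G₂) : Group (Amalgam i₁ i₂) :=
  QuotientGroup.Quotient.group _

/-- The natural homomorphism `G₁ → G₁ *_H G₂`. -/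
def Amalgam.inl {G₁ G₂ H : Type*} [Group G₁] [Group G₂] [Group H]
    (i₁ : H →* G₁) (i₂ : H →* G₂) : G₁ →* Amalgam i₁ i₂ :=
  (QuotientGroup.mk' _).comp Monoid.Coprod.inl

/-- The natural homomorphism `G₂ → G₁ *_H G₂`. -/
def Amalgam.inr {G₁ G₂ H : Type*} [Group G₁] [Group G₂] [Group H]
    (i₁ : H →* G₁) (i₂ : H →* G₂) : G₂ →* Amalgam i₁ i₂ :=
  (QuotientGroup.mk' _).comp Monoid.Coprod.inr

namespace AmalgamProof
open Monoid PushoutI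

section General

variable {ι : Type*} {G : ι → Type*} [∀ i, Group (G i)] {H : Type*} [Group H]
  {φ : ∀ i, H →* G i}

theorem master (hφ : ∀ i, Function.Injective (φ i)) (L : List (Σ i, G i))
    (hL : L ≠ []) (hchain : L.Chain' (fun a b => a.1 ≠ b.1))
    (hmem : ∀ a ∈ L, a.2 ∉ (φ a.1).range) :
    (L.map fun a => of (φ := φ) a.1 a.2).prod ≠ 1 := by
  intro heq
  have hne1 : ∀ a ∈ L, a.2 ≠ 1 := fun a ha h1 => hmem a ha ⟨1, by simp [h1]⟩
  let w : CoprodI.Word G := ⟨L, hne1, hchain⟩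
  have hred : Reduced φ w := fun a ha => hmem a ha
  have hprod : ofCoprodI (φ := φ) w.prod = (L.map fun a => of (φ := φ) a.1 a.2).prod := by
    rw [CoprodI.Word.prod, map_list_prod, List.map_map]
    congr 1
  have hemp := hred.eq_empty_of_mem_range hφ (by rw [hprod, heq]; exact ⟨1, map_one _⟩)
  exact hL (congrArg CoprodI.Word.toList hemp)

/-- the alternating word `[⟨j,a₀⟩, ⟨i,b₀⟩, ⟨j,a₁⟩, …]` built from a list of pairs -/
def core (j i : ι) (l : List (G j × G i)) : List (Σ k, G k) :=
  l.flatMap fun p => [⟨j, p.1⟩, ⟨i, p.2⟩]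

theorem core_ne_nil {j i : ι} {l : List (G j × G i)} (h : l ≠ []) : core j i l ≠ [] := by
  cases l with
  | nil => exact absurd rfl h
  | cons p t => simp [core]

theorem mem_core {j i : ι} {l : List (G j × G i)} {a : Σ k, G k} (ha : a ∈ core j i l) :
    ∃ p ∈ l, a = ⟨j, p.1⟩ ∨ a = ⟨i, p.2⟩ := by
  simp only [core, List.mem_flatMap, List.mem_cons, List.mem_singleton] at ha
  rcases ha with ⟨p, hp, h | h⟩
  · exact ⟨p, hp, Or.inl h⟩
  · exact ⟨p, hp, Or.inr (by simpa using h)⟩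

theorem core_chain {j i : ι} (hij : i ≠ j) :
    ∀ (l : List (G j × G i)) (t : List (Σ k, G k)),
      t.Chain' (fun a b => a.1 ≠ b.1) → (∀ a ∈ t.head?, a.1 = j) →
      (core j i l ++ t).Chain' (fun a b => a.1 ≠ b.1) ∧
        (l ≠ [] → ∀ a ∈ (core j i l ++ t).head?, a.1 = j) := by
  intro l
  induction l with
  | nil => intro t ht hh; exact ⟨ht, fun h => absurd rfl h⟩
  | cons p l ih =>
    intro t ht hh
    have h2 := ih t ht hh
    constructor
    · show List.Chain' _ (⟨j, p.1⟩ :: ⟨i, p.2⟩ :: (core j i l ++ t))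
      refine List.isChain_cons.2 ⟨by simp [hij.symm], List.isChain_cons.2 ⟨?_, h2.1⟩⟩
      intro b hb
      cases l with
      | nil =>
        have := hh b (by simpa [core] using hb)
        simp [this, hij]
      | cons q l' =>
        have : (⟨j, q.1⟩ : Σ k, G k) = b := by simpa [core] using hb
        simp [← this, hij]
    · intro _ a haa
      have : (⟨j, p.1⟩ : Σ k, G k) = a := by simpa [core] using haa
      simp [← this]

theorem core_prod {j i : ι} (l : List (G j × G i)) (t : List (Σ k, G k)) :
    ((core j i l ++ t).map fun a => of (φ := φ) a.1 a.2).prod =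
      (l.map fun p => of (φ := φ) j p.1 * of (φ := φ) i p.2).prod *
        (t.map fun a => of (φ := φ) a.1 a.2).prod := by
  induction l with
  | nil => simp [core]
  | cons p l ih => simp [core, mul_assoc] at ih ⊢; rw [ih]

theorem not_base_range {k : ι} {g : G k} (h : of (φ := φ) k g ∉ (base φ).range) :
    g ∉ (φ k).range := by
  rintro ⟨h', rfl⟩
  exact h ⟨h', (of_apply_eq_base φ k h').symm⟩

theorem alt_list (hφ : ∀ i, Function.Injective (φ i)) {i j : ι} (hij : i ≠ j)
    (l : List (G j × G i)) (x : G i) (y : G j) (hne : l ≠ [])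
    (h1 : ∀ p ∈ l, of (φ := φ) j p.1 ∉ (base φ).range)
    (h2 : ∀ p ∈ l, of (φ := φ) i p.2 ∉ (base φ).range) :
    of (φ := φ) i x * (l.map fun p => of (φ := φ) j p.1 * of (φ := φ) i p.2).prod *
      of (φ := φ) j y ≠ 1 := by
  classical
  intro heq
  -- Step 1: absorb `y` if it lies in the base group; get list `l₁` and tail `t`.
  obtain ⟨l₁, t, hl₁ne, hl₁a, hl₁b, htc, htm, hth, hE⟩ :
      ∃ (l₁ : List (G j × G i)) (t : List (Σ k, G k)),
        l₁ ≠ [] ∧ (∀ p ∈ l₁, of (φ := φ) j p.1 ∉ (base φ).range) ∧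
        (∀ p ∈ l₁, of (φ := φ) i p.2 ∉ (base φ).range) ∧
        t.Chain' (fun a b => a.1 ≠ b.1) ∧ (∀ a ∈ t, a.2 ∉ (φ a.1).range) ∧
        (∀ a ∈ t.head?, a.1 = j) ∧
        of (φ := φ) i x *
          ((l₁.map fun p => of (φ := φ) j p.1 * of (φ := φ) i p.2).prod *
            (t.map fun a => of (φ := φ) a.1 a.2).prod) = 1 := by
    by_cases hy : of (φ := φ) j y ∈ (base φ).range
    · obtain ⟨h, hh⟩ := hy
      rcases l.eq_nil_or_concat' with rfl | ⟨l', q, rfl⟩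
      · exact absurd rfl hne
      refine ⟨l' ++ [(q.1, q.2 * φ i h)], [], by simp, ?_, ?_, List.isChain_nil, by simp, by simp, ?_⟩
      · intro p hp
        rcases List.mem_append.1 hp with hp | hp
        · exact h1 p (List.mem_append.2 (Or.inl hp))
        · have : p = (q.1, q.2 * φ i h) := by simpa using hp
          subst this
          exact h1 q (by simp)
      · intro p hp
        rcases List.mem_append.1 hp with hp | hp
        · exact h2 p (List.mem_append.2 (Or.inl hp))
        · have : p = (q.1, q.2 * φ i h) := by simpa using hp
          subst this
          intro hr
          refine h2 q (by simp) ?_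
          simp only [map_mul, of_apply_eq_base] at hr
          rcases hr with ⟨h', hh'⟩
          exact ⟨h' * h⁻¹, by rw [map_mul, map_inv, hh', mul_inv_cancel_right]⟩
      · rw [← heq]
        simp only [List.map_append, List.prod_append, List.map_cons, List.prod_cons,
          List.map_nil, List.prod_nil, map_mul, of_apply_eq_base, mul_one, ← hh]
        simp [mul_assoc, of_apply_eq_base]
    · refine ⟨l, [⟨j, y⟩], hne, h1, h2, List.isChain_singleton _, ?_, by simp, by simpa [mul_assoc] using heq⟩
      intro a ha
      have : a = (⟨j, y⟩ : Σ k, G k) := by simpa using ha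
      subst this
      exact not_base_range hy
  -- Step 2: absorb `x` if it lies in the base group, build the final word.
  by_cases hx : of (φ := φ) i x ∈ (base φ).range
  · obtain ⟨h, hh⟩ := hx
    rcases l₁ with _ | ⟨p, l₂⟩
    · exact absurd rfl hl₁ne
    refine master hφ (core j i ((φ j h * p.1, p.2) :: l₂) ++ t)
      (by simp [core]) ((core_chain hij _ t htc hth).1) ?_ ?_
    · intro a ha
      rcases List.mem_append.1 ha with ha | ha
      · rcases mem_core ha with ⟨p', hp', rfl | rfl⟩
        · rcases List.mem_cons.1 hp' with rfl | hp'
          · show φ j h * p.1 ∉ _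
            rintro ⟨h', hh'⟩
            refine hl₁a p List.mem_cons_self ?_
            have : p.1 = φ j (h⁻¹ * h') := by
              rw [map_mul, map_inv, hh', inv_mul_cancel_left]
            rw [this, of_apply_eq_base]
            exact ⟨_, rfl⟩
          · exact not_base_range (hl₁a p' (by simp [hp']))
        · rcases List.mem_cons.1 hp' with rfl | hp'
          · exact not_base_range (hl₁b p List.mem_cons_self)
          · exact not_base_range (hl₁b p' (by simp [hp']))
      · exact htm a ha
    · rw [core_prod, ← hE]
      simp only [List.map_cons, List.prod_cons, map_mul, of_apply_eq_base, ← hh]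
      simp [mul_assoc]
  · refine master hφ (⟨i, x⟩ :: (core j i l₁ ++ t)) (by simp) ?_ ?_ ?_
    · refine List.isChain_cons.2 ⟨?_, (core_chain hij l₁ t htc hth).1⟩
      intro b hb
      have hbj := (core_chain hij l₁ t htc hth).2 hl₁ne b hb
      show (⟨i, x⟩ : Σ k, G k).1 ≠ b.1
      rw [hbj]; exact hij
    · intro a ha
      rcases List.mem_cons.1 ha with rfl | ha
      · exact not_base_range hx
      rcases List.mem_append.1 ha with ha | ha
      · rcases mem_core ha with ⟨p', hp', rfl | rfl⟩
        · exact not_base_range (hl₁a p' hp')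
        · exact not_base_range (hl₁b p' hp')
      · exact htm a ha
    · rw [List.map_cons, List.prod_cons, core_prod, ← hE]

theorem prod_alt {M : Type*} [Monoid M] :
    ∀ (m : ℕ) (A B : Fin (m + 2) → M),
      (List.ofFn fun k => A k * B k).prod =
        A 0 * (List.ofFn fun k : Fin (m + 1) => B k.castSucc * A k.succ).prod *
          B (Fin.last (m + 1)) := by
  intro m
  induction m with
  | zero =>
    intro A B
    simp [List.ofFn_succ, mul_assoc, Fin.last]
  | succ m ih =>
    intro A B
    rw [List.ofFn_succ, List.prod_cons, ih (fun k => A k.succ) (fun k => B k.succ)]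
    rw [show (List.ofFn fun k : Fin (m + 2) => B k.castSucc * A k.succ) =
        (B 0 * A 1) :: List.ofFn (fun k : Fin (m + 1) => B k.castSucc.succ * A k.succ.succ) by
      rw [List.ofFn_succ]
      simp [Fin.succ_castSucc, -Fin.castSucc_succ]]
    rw [List.prod_cons]
    have h1 : (1 : Fin (m + 3)) = (0 : Fin (m + 2)).succ := rfl
    have h2 : Fin.last (m + 2) = (Fin.last (m + 1)).succ := by simp [Fin.succ_last]
    simp only [h2]
    simp [mul_assoc]

theorem pushout_alt (hφ : ∀ i, Function.Injective (φ i)) {i j : ι} (hij : i ≠ j)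
    (n : ℕ) (hn : 1 < n) (X : Fin n → G i) (Y : Fin n → G j)
    (hX : ∀ k : Fin n, 0 < (k : ℕ) → of (φ := φ) i (X k) ∉ (base φ).range)
    (hY : ∀ k : Fin n, (k : ℕ) < n - 1 → of (φ := φ) j (Y k) ∉ (base φ).range) :
    (List.map (fun k => of (φ := φ) i (X k) * of (φ := φ) j (Y k))
      (List.finRange n)).prod ≠ 1 := by
  obtain ⟨m, rfl⟩ : ∃ m, n = m + 2 := ⟨n - 2, by omega⟩
  rw [← List.ofFn_eq_map, prod_alt m]
  have hmap : (List.ofFn fun k : Fin (m + 1) =>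
      of (φ := φ) j (Y k.castSucc) * of (φ := φ) i (X k.succ)) =
      (List.ofFn fun k : Fin (m + 1) => (Y k.castSucc, X k.succ)).map
        (fun p => of (φ := φ) j p.1 * of (φ := φ) i p.2) := by
    rw [List.map_ofFn]; rfl
  rw [hmap]
  refine alt_list hφ hij _ (X 0) (Y (Fin.last (m + 1))) (by simp) ?_ ?_
  · intro p hp
    rw [List.mem_ofFn] at hp
    obtain ⟨k, rfl⟩ := hp
    exact hY k.castSucc (by simp; exact k.is_le)
  · intro p hp
    rw [List.mem_ofFn] at hp
    obtain ⟨k, rfl⟩ := hp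
    exact hX k.succ (by simp)

end General

universe u v w

/-- the two-element family of groups -/
def Fam (G₁ : Type u) (G₂ : Type v) : Bool → Type (max u v) :=
  fun b => Bool.rec (ULift.{u} G₂) (ULift.{v} G₁) b

instance famGroup {G₁ : Type u} {G₂ : Type v} [Group G₁] [Group G₂] :
    ∀ b, Group (Fam G₁ G₂ b) :=
  fun b => Bool.rec (inferInstanceAs (Group (ULift G₂))) (inferInstanceAs (Group (ULift G₁))) b

variable {G₁ : Type u} {G₂ : Type v} {H : Type w} [Group G₁] [Group G₂] [Group H]

/-- the pair of maps from the base -/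
def famφ (i₁ : H →* G₁) (i₂ : H →* G₂) : ∀ b, H →* Fam G₁ G₂ b :=
  fun b => Bool.rec ((MulEquiv.ulift.symm : G₂ ≃* ULift G₂).toMonoidHom.comp i₂)
    ((MulEquiv.ulift.symm : G₁ ≃* ULift G₁).toMonoidHom.comp i₁) b

theorem famφ_inj {i₁ : H →* G₁} {i₂ : H →* G₂} (h1 : Function.Injective i₁)
    (h2 : Function.Injective i₂) : ∀ b, Function.Injective (famφ i₁ i₂ b) := by
  intro b
  cases b
  · intro x y hxy
    exact h2 (congrArg ULift.down hxy)
  · intro x y hxy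
    exact h1 (congrArg ULift.down hxy)

variable (i₁ : H →* G₁) (i₂ : H →* G₂)

theorem amalgam_rel (h : H) :
    Amalgam.inl i₁ i₂ (i₁ h) = Amalgam.inr i₁ i₂ (i₂ h) := by
  show QuotientGroup.mk' _ (Monoid.Coprod.inl (i₁ h)) = QuotientGroup.mk' _ (Monoid.Coprod.inr (i₂ h))
  rw [QuotientGroup.mk'_apply, QuotientGroup.mk'_apply, QuotientGroup.eq]
  set N := Subgroup.normalClosure
    {x | ∃ h : H, x = Monoid.Coprod.inl (i₁ h) * (Monoid.Coprod.inr (i₂ h))⁻¹} with hN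
  have hg : Monoid.Coprod.inl (i₁ h) * (Monoid.Coprod.inr (i₂ h))⁻¹ ∈ N :=
    Subgroup.subset_normalClosure ⟨h, rfl⟩
  have hnormal : N.Normal := Subgroup.normalClosure_normal
  have := hnormal.conj_mem _ (inv_mem hg) (Monoid.Coprod.inl (i₁ h))⁻¹
  convert this using 1
  group

/-- the homomorphism from the amalgam to the pushout -/
def toPush : Amalgam i₁ i₂ →* PushoutI (famφ i₁ i₂) :=
  QuotientGroup.lift _
    (Monoid.Coprod.lift
      ((of (φ := famφ i₁ i₂) true).comp (MulEquiv.ulift.symm : G₁ ≃* ULift G₁).toMonoidHom)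
      ((of (φ := famφ i₁ i₂) false).comp (MulEquiv.ulift.symm : G₂ ≃* ULift G₂).toMonoidHom))
    (by
      refine Subgroup.normalClosure_le_normal ?_
      rintro y ⟨h, rfl⟩
      rw [SetLike.mem_coe, MonoidHom.mem_ker, map_mul, map_inv,
        Monoid.Coprod.lift_apply_inl, Monoid.Coprod.lift_apply_inr]
      show of (φ := famφ i₁ i₂) true (famφ i₁ i₂ true h) *
        (of (φ := famφ i₁ i₂) false (famφ i₁ i₂ false h))⁻¹ = 1
      rw [of_apply_eq_base, of_apply_eq_base, mul_inv_cancel])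

theorem toPush_inl (g : G₁) :
    toPush i₁ i₂ (Amalgam.inl i₁ i₂ g) = of (φ := famφ i₁ i₂) true (ULift.up g) := by
  rfl

theorem toPush_inr (g : G₂) :
    toPush i₁ i₂ (Amalgam.inr i₁ i₂ g) = of (φ := famφ i₁ i₂) false (ULift.up g) := by
  rfl

/-- the homomorphism from the pushout back to the amalgam -/
def fromPush : PushoutI (famφ i₁ i₂) →* Amalgam i₁ i₂ :=
  PushoutI.lift
    (fun b => Bool.rec ((Amalgam.inr i₁ i₂).comp (MulEquiv.ulift : ULift G₂ ≃* G₂).toMonoidHom)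
      ((Amalgam.inl i₁ i₂).comp (MulEquiv.ulift : ULift G₁ ≃* G₁).toMonoidHom) b)
    ((Amalgam.inl i₁ i₂).comp i₁)
    (by
      intro b
      cases b
      · ext h
        exact (amalgam_rel i₁ i₂ h).symm
      · ext h
        rfl)

theorem fromPush_of_true (g : G₁) :
    fromPush i₁ i₂ (of (φ := famφ i₁ i₂) true (ULift.up g)) = Amalgam.inl i₁ i₂ g := by
  delta fromPush
  erw [PushoutI.lift_of]

theorem fromPush_of_false (g : G₂) :
    fromPush i₁ i₂ (of (φ := famφ i₁ i₂) false (ULift.up g)) = Amalgam.inr i₁ i₂ g := by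
  delta fromPush
  erw [PushoutI.lift_of]

theorem fromPush_base (h : H) :
    fromPush i₁ i₂ (base (famφ i₁ i₂) h) = Amalgam.inl i₁ i₂ (i₁ h) := by
  delta fromPush
  rw [PushoutI.lift_base]
  rfl

end AmalgamProof

/-- In an amalgamated free product `G = G₁ *_H G₂` with `H` embedded in both factors,
an alternating product `X₁Y₁⋯XₙYₙ` with `n > 1`, `Xᵢ ∉ H` for `i > 1` and `Yᵢ ∉ H`
for `i < n`, is nontrivial in `G`. (Membership in `H` refers to the image of `H`
in `G`.) -/
theorem amalgam_alternating_ne_one {G₁ G₂ H : Type*} [Group G₁] [Group G₂] [Group H]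
    (i₁ : H →* G₁) (i₂ : H →* G₂)
    (h₁ : Function.Injective i₁) (h₂ : Function.Injective i₂)
    (n : ℕ) (hn : 1 < n) (X : Fin n → G₁) (Y : Fin n → G₂)
    (hX : ∀ i : Fin n, 0 < (i : ℕ) →
      Amalgam.inl i₁ i₂ (X i) ∉ ((Amalgam.inl i₁ i₂).comp i₁).range)
    (hY : ∀ i : Fin n, (i : ℕ) < n - 1 →
      Amalgam.inr i₁ i₂ (Y i) ∉ ((Amalgam.inl i₁ i₂).comp i₁).range) :
    (List.map (fun i => Amalgam.inl i₁ i₂ (X i) * Amalgam.inr i₁ i₂ (Y i))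
      (List.finRange n)).prod ≠ 1 := by
  classical
  intro heq
  have hφ' := AmalgamProof.famφ_inj h₁ h₂
  have htf : (true : Bool) ≠ false := by decide
  refine AmalgamProof.pushout_alt hφ' htf n hn
    (fun k => ULift.up (X k)) (fun k => ULift.up (Y k)) ?_ ?_ ?_
  · intro k hk hmem
    obtain ⟨h, hh⟩ := hmem
    have h2 := congrArg (AmalgamProof.fromPush i₁ i₂) hh
    rw [AmalgamProof.fromPush_base, AmalgamProof.fromPush_of_true] at h2
    exact hX k hk ⟨h, h2⟩
  · intro k hk hmem
    obtain ⟨h, hh⟩ := hmem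
    have h2 := congrArg (AmalgamProof.fromPush i₁ i₂) hh
    rw [AmalgamProof.fromPush_base, AmalgamProof.fromPush_of_false] at h2
    exact hY k hk ⟨h, h2⟩
  · have h2 := congrArg (AmalgamProof.toPush i₁ i₂) heq
    rw [map_list_prod, List.map_map, map_one] at h2
    rw [← h2]
    congr 1
end

section
/- The natural homomorphisms G₁ → G₁ *_H G₂ and G₂ → G₁ *_H G₂ into an amalgamated free product are injective. -/
/-!
The amalgam maps to Mathlib's pushout `Monoid.PushoutI` of the two-member family
`H → G₁`, `H → G₂`, and the composites with `inl`, `inr` are the canonical maps of the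
factors into that pushout. These are injective when `i₁`, `i₂` are, by the normal form
theorem for pushouts of groups (`Monoid.PushoutI.of_injective`).
-/

namespace Amalgam

universe u v w

variable {G₁ : Type u} {G₂ : Type v} {H : Type w} [Group G₁] [Group G₂] [Group H]

/-- `Monoid.PushoutI` takes a family of groups in one universe, so `G₁` and `G₂` are lifted. -/
def Factor (G₁ : Type u) (G₂ : Type v) : Bool → Type (max u v)
  | true => ULift G₁
  | false => ULift G₂

instance : ∀ b, Group (Factor G₁ G₂ b)
  | true => ULift.group
  | false => ULift.group

variable (i₁ : H →* G₁) (i₂ : H →* G₂)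

def factorHom : ∀ b, H →* Factor G₁ G₂ b
  | true => MulEquiv.ulift.symm.toMonoidHom.comp i₁
  | false => MulEquiv.ulift.symm.toMonoidHom.comp i₂

theorem factorHom_injective (h₁ : Function.Injective i₁) (h₂ : Function.Injective i₂) :
    ∀ b, Function.Injective (factorHom i₁ i₂ b)
  | true => MulEquiv.ulift.symm.injective.comp h₁
  | false => MulEquiv.ulift.symm.injective.comp h₂

def pushoutInl : G₁ →* Monoid.PushoutI (factorHom i₁ i₂) :=
  (Monoid.PushoutI.of (φ := factorHom i₁ i₂) true).comp MulEquiv.ulift.symm.toMonoidHom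

def pushoutInr : G₂ →* Monoid.PushoutI (factorHom i₁ i₂) :=
  (Monoid.PushoutI.of (φ := factorHom i₁ i₂) false).comp MulEquiv.ulift.symm.toMonoidHom

theorem pushoutInl_injective (h₁ : Function.Injective i₁) (h₂ : Function.Injective i₂) :
    Function.Injective (pushoutInl i₁ i₂) :=
  (Monoid.PushoutI.of_injective (factorHom_injective i₁ i₂ h₁ h₂) true).comp
    MulEquiv.ulift.symm.injective

theorem pushoutInr_injective (h₁ : Function.Injective i₁) (h₂ : Function.Injective i₂) :
    Function.Injective (pushoutInr i₁ i₂) :=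
  (Monoid.PushoutI.of_injective (factorHom_injective i₁ i₂ h₁ h₂) false).comp
    MulEquiv.ulift.symm.injective

theorem pushoutInl_apply_eq_pushoutInr_apply (h : H) :
    pushoutInl i₁ i₂ (i₁ h) = pushoutInr i₁ i₂ (i₂ h) :=
  (Monoid.PushoutI.of_apply_eq_base (factorHom i₁ i₂) true h).trans
    (Monoid.PushoutI.of_apply_eq_base (factorHom i₁ i₂) false h).symm

def toPushoutI : Amalgam i₁ i₂ →* Monoid.PushoutI (factorHom i₁ i₂) :=
  QuotientGroup.lift _ (Monoid.Coprod.lift (pushoutInl i₁ i₂) (pushoutInr i₁ i₂)) <|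
    Subgroup.normalClosure_le_normal <| by
      rintro _ ⟨h, rfl⟩
      simp [pushoutInl_apply_eq_pushoutInr_apply]

theorem toPushoutI_inl (g : G₁) : toPushoutI i₁ i₂ (inl i₁ i₂ g) = pushoutInl i₁ i₂ g :=
  rfl

theorem toPushoutI_inr (g : G₂) : toPushoutI i₁ i₂ (inr i₁ i₂ g) = pushoutInr i₁ i₂ g :=
  rfl

theorem inl_injective (h₁ : Function.Injective i₁) (h₂ : Function.Injective i₂) :
    Function.Injective (inl i₁ i₂) :=
  Function.Injective.of_comp (f := toPushoutI i₁ i₂) <| by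
    simpa only [Function.comp_def, toPushoutI_inl] using pushoutInl_injective i₁ i₂ h₁ h₂

theorem inr_injective (h₁ : Function.Injective i₁) (h₂ : Function.Injective i₂) :
    Function.Injective (inr i₁ i₂) :=
  Function.Injective.of_comp (f := toPushoutI i₁ i₂) <| by
    simpa only [Function.comp_def, toPushoutI_inr] using pushoutInr_injective i₁ i₂ h₁ h₂

end Amalgam

/-- The natural homomorphisms of the factors into an amalgamated free product are
injective. -/
theorem amalgam_factors_embed {G₁ G₂ H : Type*} [Group G₁] [Group G₂] [Group H]
    (i₁ : H →* G₁) (i₂ : H →* G₂)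
    (h₁ : Function.Injective i₁) (h₂ : Function.Injective i₂) :
    Function.Injective (Amalgam.inl i₁ i₂) ∧ Function.Injective (Amalgam.inr i₁ i₂) :=
  ⟨Amalgam.inl_injective i₁ i₂ h₁ h₂, Amalgam.inr_injective i₁ i₂ h₁ h₂⟩
end
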